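/- Combining the previous two results: if two finite-MDP Bellman optimality operators satisfy |R₁ - R₂| ≤ ε_R pointwise and total-variation transition distance at most ε_P, and all value functions are bounded by V_max = R_max/(1-γ), then the optimal value functions satisfy ‖V₁* - V₂*‖_∞ ≤ (ε_R + γ·ε_P·R_max/(1-γ))/(1-γ). -/
import Mathlib

lemma abs_ciSup_sub_ciSup {A : Type*} [Fintype A] [Nonempty A]
    (f g : A → ℝ) (C : ℝ) (h : ∀ a, |f a - g a| ≤ C) :
    |(⨆ a, f a) - (⨆ a, g a)| ≤ C := by
  have hbf : BddAbove (Set.range f) := (Set.finite_range f).bddAbove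
  have hbg : BddAbove (Set.range g) := (Set.finite_range g).bddAbove
  rw [abs_sub_le_iff]
  constructor
  · rw [sub_le_iff_le_add]
    refine ciSup_le fun a => ?_
    have := abs_le.1 (h a)
    have : f a ≤ g a + C := by linarith [this.2]
    exact this.trans (by linarith [le_ciSup hbg a])
  · rw [sub_le_iff_le_add]
    refine ciSup_le fun a => ?_
    have := abs_le.1 (h a)
    have : g a ≤ f a + C := by linarith [this.1]
    exact this.trans (by linarith [le_ciSup hbf a])

theorem optimal_values_of_nearby_mdps {S A : Type*}
    [Fintype S] [Nonempty S] [Fintype A] [Nonempty A]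
    (γ εR εP Rmax : ℝ) (hγ0 : 0 ≤ γ) (hγ1 : γ < 1)
    (hεR : 0 ≤ εR) (hεP : 0 ≤ εP) (hRmax : 0 ≤ Rmax)
    (R₁ R₂ : S → A → ℝ) (P₁ P₂ : S → A → S → ℝ)
    (hP₁pos : ∀ s a s', 0 ≤ P₁ s a s') (hP₁sum : ∀ s a, ∑ s', P₁ s a s' = 1)
    (hP₂pos : ∀ s a s', 0 ≤ P₂ s a s') (hP₂sum : ∀ s a, ∑ s', P₂ s a s' = 1)
    (hR₁bdd : ∀ s a, |R₁ s a| ≤ Rmax) (hR₂bdd : ∀ s a, |R₂ s a| ≤ Rmax)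
    (hR : ∀ s a, |R₁ s a - R₂ s a| ≤ εR)
    (hP : ∀ s a, ∑ s', |P₁ s a s' - P₂ s a s'| ≤ εP)
    (V₁ V₂ : S → ℝ)
    (hfix₁ : ∀ s, V₁ s = ⨆ a : A, (R₁ s a + γ * ∑ s', P₁ s a s' * V₁ s'))
    (hfix₂ : ∀ s, V₂ s = ⨆ a : A, (R₂ s a + γ * ∑ s', P₂ s a s' * V₂ s'))
    (hV₁bdd : ∀ s, |V₁ s| ≤ Rmax / (1 - γ))
    (hV₂bdd : ∀ s, |V₂ s| ≤ Rmax / (1 - γ)) :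
    ∀ s, |V₁ s - V₂ s| ≤ (εR + γ * εP * Rmax / (1 - γ)) / (1 - γ) := by
  have h1γ : 0 < 1 - γ := by linarith
  obtain ⟨s₀, -, hs₀⟩ := Finset.exists_max_image Finset.univ
    (fun s => |V₁ s - V₂ s|) Finset.univ_nonempty
  set D := |V₁ s₀ - V₂ s₀| with hD
  have hDmax : ∀ s, |V₁ s - V₂ s| ≤ D := fun s => hs₀ s (Finset.mem_univ s)
  have key : D ≤ εR + γ * (εP * (Rmax / (1 - γ)) + D) := by
    conv_lhs => rw [hD, hfix₁ s₀, hfix₂ s₀]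
    refine abs_ciSup_sub_ciSup _ _ _ fun a => ?_
    have hsum : |(∑ s', P₁ s₀ a s' * V₁ s') - ∑ s', P₂ s₀ a s' * V₂ s'|
        ≤ εP * (Rmax / (1 - γ)) + D := by
      have heq : (∑ s', P₁ s₀ a s' * V₁ s') - ∑ s', P₂ s₀ a s' * V₂ s'
          = (∑ s', (P₁ s₀ a s' - P₂ s₀ a s') * V₂ s')
            + ∑ s', P₁ s₀ a s' * (V₁ s' - V₂ s') := by
        rw [← Finset.sum_add_distrib, ← Finset.sum_sub_distrib]
        congr 1; ext s'; ring
      rw [heq]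
      refine (abs_add_le _ _).trans (add_le_add ?_ ?_)
      · refine (Finset.abs_sum_le_sum_abs _ _).trans ?_
        calc ∑ s', |(P₁ s₀ a s' - P₂ s₀ a s') * V₂ s'|
            ≤ ∑ s', |P₁ s₀ a s' - P₂ s₀ a s'| * (Rmax / (1 - γ)) := by
              refine Finset.sum_le_sum fun s' _ => ?_
              rw [abs_mul]
              exact mul_le_mul_of_nonneg_left (hV₂bdd s') (abs_nonneg _)
          _ = (∑ s', |P₁ s₀ a s' - P₂ s₀ a s'|) * (Rmax / (1 - γ)) := by
              rw [Finset.sum_mul]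
          _ ≤ εP * (Rmax / (1 - γ)) :=
              mul_le_mul_of_nonneg_right (hP s₀ a) (by positivity)
      · refine (Finset.abs_sum_le_sum_abs _ _).trans ?_
        calc ∑ s', |P₁ s₀ a s' * (V₁ s' - V₂ s')|
            ≤ ∑ s', P₁ s₀ a s' * D := by
              refine Finset.sum_le_sum fun s' _ => ?_
              rw [abs_mul, abs_of_nonneg (hP₁pos s₀ a s')]
              exact mul_le_mul_of_nonneg_left (hDmax s') (hP₁pos s₀ a s')
          _ = D := by rw [← Finset.sum_mul, hP₁sum s₀ a, one_mul]
    calc |(R₁ s₀ a + γ * ∑ s', P₁ s₀ a s' * V₁ s')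
          - (R₂ s₀ a + γ * ∑ s', P₂ s₀ a s' * V₂ s')|
        = |(R₁ s₀ a - R₂ s₀ a) + γ * ((∑ s', P₁ s₀ a s' * V₁ s')
            - ∑ s', P₂ s₀ a s' * V₂ s')| := by ring_nf
      _ ≤ |R₁ s₀ a - R₂ s₀ a| + γ * |(∑ s', P₁ s₀ a s' * V₁ s')
            - ∑ s', P₂ s₀ a s' * V₂ s'| := by
          refine (abs_add_le _ _).trans ?_
          rw [abs_mul, abs_of_nonneg hγ0]
      _ ≤ εR + γ * (εP * (Rmax / (1 - γ)) + D) :=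
          add_le_add (hR s₀ a) (mul_le_mul_of_nonneg_left hsum hγ0)
  have hDle : D ≤ (εR + γ * εP * Rmax / (1 - γ)) / (1 - γ) := by
    rw [le_div_iff₀ h1γ]
    have : γ * εP * Rmax / (1 - γ) = γ * (εP * (Rmax / (1 - γ))) := by
      field_simp
    nlinarith [key]
  exact fun s => (hDmax s).trans hDle
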